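/- There exist constants c > 0 and n₀ such that for every n ≥ n₀, if f : [n] → [n] is chosen uniformly at random, then with probability at least 1 − e^{−c·n} the function f differs from every permutation of [n] on at least n/8 values; equivalently, the number of functions f : [n] → [n] for which there exists a permutation σ of [n] with |{i ∈ [n] : f(i) ≠ σ(i)}| < n/8 is at most e^{−c·n} · n^n. -/

import Mathlib

/-!
If `f` differs from a permutation `σ` exactly on a set `S` with `#S = m < n/8`, then `f` is
injective off `S`; for fixed `S` there are at most `n ^ m * n! / m!` such `f`. Summing over `S`,
with `choose n m ≤ n ^ m / m!`, the bad functions number at most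
`(n + 1) n! max_{m < n/8} (n ^ m / m!)²`.
Since `n ^ m / m! = 8 ^ m (n/8) ^ m / m! ≤ 8 ^ (n/8) e ^ (n/8)` and, by Stirling,
`n! ≤ e √n (n/e) ^ n`, this is `n ^ n` times a polynomial times `e ^ (-(3 - log 8) n / 4)`,
which decays exponentially because `8 < e ^ 3`.
-/

open Finset Real Filter
open scoped Nat

section Counting

variable {α β : Type*} [Fintype α] [DecidableEq α] [Fintype β]

theorem card_injOn_compl_le (S : Finset α) :
    Nat.card {f : α → β // Set.InjOn f ↑(Sᶜ)} ≤
      Fintype.card β ^ #S * (Fintype.card β).descFactorial (Fintype.card α - #S) := by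
  let restrict (f : {f : α → β // Set.InjOn f ↑(Sᶜ)}) : (S → β) × (↥Sᶜ ↪ β) :=
    (fun i => f.1 i,
      ⟨fun i => f.1 i, fun a b h => Subtype.ext (f.2 (mem_coe.2 a.2) (mem_coe.2 b.2) h)⟩)
  have restrict_injective : Function.Injective restrict := by
    rintro ⟨f, _⟩ ⟨g, _⟩ h
    simp only [restrict, Prod.mk.injEq] at h
    ext1; funext i
    by_cases hi : i ∈ S
    · exact congrFun h.1 ⟨i, hi⟩
    · exact DFunLike.congr_fun h.2 ⟨i, by simpa using hi⟩
  calc Nat.card {f : α → β // Set.InjOn f ↑(Sᶜ)} ≤ Nat.card ((S → β) × (↥Sᶜ ↪ β)) :=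
        Nat.card_le_card_of_injective restrict restrict_injective
    _ = _ := by simp [Nat.card_eq_fintype_card, Fintype.card_embedding_eq]

theorem card_exists_perm_card_ne_le (p : ℕ → Prop) [DecidablePred p] :
    Nat.card {f : α → α // ∃ σ : Equiv.Perm α, p (Nat.card {i // f i ≠ σ i})} ≤
      ∑ S : Finset α with p #S, Nat.card {f : α → α // Set.InjOn f ↑(Sᶜ)} := by
  classical
  simp only [Nat.card_eq_fintype_card, Fintype.card_subtype]
  refine (card_le_card fun f hf => ?_).trans card_biUnion_le
  obtain ⟨σ, hσ⟩ := (mem_filter.1 hf).2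
  simp only [mem_biUnion, mem_filter, mem_univ, true_and]
  refine ⟨({i | f i ≠ σ i} : Finset α), by simpa [Fintype.card_subtype] using hσ,
    fun a ha b hb hab => ?_⟩
  simp only [coe_compl, coe_filter, Set.mem_compl_iff, Set.mem_ofPred_eq, mem_univ, true_and,
    not_not] at ha hb
  exact σ.injective (ha ▸ hb ▸ hab)

end Counting

theorem pow_div_factorial_le_pow_mul_exp {x t : ℝ} (hx : 0 ≤ x) (ht : 0 < t) (m : ℕ) :
    x ^ m / m ! ≤ t ^ m * exp (x / t) := by
  calc x ^ m / m ! = t ^ m * ((x / t) ^ m / m !) := by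
        rw [div_pow]; field_simp
    _ ≤ t ^ m * exp (x / t) := by
        gcongr; exact pow_div_factorial_le_exp _ (by positivity) m

theorem pow_div_factorial_le_exp_of_le_div_eight {n m : ℕ} (hm : (m : ℝ) ≤ n / 8) :
    (n : ℝ) ^ m / m ! ≤ exp ((log 8 + 1) / 8 * n) := by
  calc (n : ℝ) ^ m / m ! ≤ 8 ^ m * exp (n / 8) :=
        pow_div_factorial_le_pow_mul_exp n.cast_nonneg (by norm_num) m
    _ = exp (m * log 8 + n / 8) := by
        rw [exp_add, ← exp_log (by norm_num : (0 : ℝ) < 8), ← exp_nat_mul, exp_log (by norm_num)]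
    _ ≤ exp ((log 8 + 1) / 8 * n) := by
        refine exp_le_exp.2 ?_
        nlinarith [log_pos (by norm_num : (1 : ℝ) < 8)]

theorem choose_mul_pow_mul_descFactorial_le {n m : ℕ} (hm : (m : ℝ) < n / 8) :
    (n.choose m : ℝ) * (n ^ m * n.descFactorial (n - m)) ≤ n ! * exp ((log 8 + 1) / 4 * n) := by
  have hmn : m ≤ n := by exact_mod_cast (show (m : ℝ) ≤ n by linarith [n.cast_nonneg (α := ℝ)])
  have hdesc : (n.descFactorial (n - m) : ℝ) = n ! / m ! := by
    rw [eq_div_iff (by positivity), mul_comm]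
    exact_mod_cast Nat.sub_sub_self hmn ▸ Nat.factorial_mul_descFactorial (n.sub_le m)
  have hpow := pow_div_factorial_le_exp_of_le_div_eight hm.le
  calc (n.choose m : ℝ) * (n ^ m * n.descFactorial (n - m))
      ≤ (n ^ m / m !) * (n ^ m * (n ! / m !)) := by
        rw [hdesc]; gcongr; exact Nat.choose_le_pow_div m n
    _ = n ! * (n ^ m / m !) ^ 2 := by ring
    _ ≤ n ! * exp ((log 8 + 1) / 8 * n) ^ 2 := by gcongr
    _ = n ! * exp ((log 8 + 1) / 4 * n) := by rw [← exp_nat_mul]; ring_nf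

theorem card_near_perm_le (n : ℕ) :
    (Nat.card {f : Fin n → Fin n // ∃ σ : Equiv.Perm (Fin n),
        (Nat.card {i : Fin n // f i ≠ σ i} : ℝ) < (n : ℝ) / 8} : ℝ)
      ≤ (n + 1) * n ! * exp ((log 8 + 1) / 4 * n) := by
  classical
  have hcount := card_exists_perm_card_ne_le (α := Fin n) (fun k => (k : ℝ) < n / 8)
  calc _ ≤ ∑ S : Finset (Fin n) with (#S : ℝ) < n / 8,
        ((n ^ #S * n.descFactorial (n - #S) : ℕ) : ℝ) := by
        exact_mod_cast hcount.trans
          (sum_le_sum fun S _ => by simpa using card_injOn_compl_le (β := Fin n) S)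
    _ = ∑ m ∈ range (n + 1), n.choose m •
          (if (m : ℝ) < n / 8 then ((n ^ m * n.descFactorial (n - m) : ℕ) : ℝ) else 0) := by
        rw [sum_filter, ← powerset_univ]
        exact (sum_powerset_apply_card fun m =>
          if (m : ℝ) < n / 8 then ((n ^ m * n.descFactorial (n - m) : ℕ) : ℝ) else 0).trans
          (by simp)
    _ ≤ ∑ _m ∈ range (n + 1), n ! * exp ((log 8 + 1) / 4 * n) := by
        refine sum_le_sum fun m _ => ?_
        split_ifs with hm
        · simpa using choose_mul_pow_mul_descFactorial_le hm
        · rw [smul_zero]; positivity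
    _ = _ := by rw [sum_const, card_range, nsmul_eq_mul]; push_cast; ring

theorem factorial_le_exp_one_mul_sqrt_mul_pow {n : ℕ} (hn : n ≠ 0) :
    (n ! : ℝ) ≤ exp 1 * √n * (n / exp 1) ^ n := by
  obtain ⟨k, rfl⟩ := Nat.exists_eq_succ_of_ne_zero hn
  have hseq : Stirling.stirlingSeq (k + 1) ≤ exp 1 / √2 :=
    Stirling.stirlingSeq_one ▸ Stirling.stirlingSeq'_antitone (Nat.zero_le k)
  rw [Stirling.stirlingSeq, div_le_iff₀ (by positivity)] at hseq
  calc ((k + 1) ! : ℝ)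
      ≤ exp 1 / √2 * (√(2 * (k + 1 : ℕ)) * ((k + 1 : ℕ) / exp 1) ^ (k + 1)) := hseq
    _ = exp 1 * √(k + 1 : ℕ) * ((k + 1 : ℕ) / exp 1) ^ (k + 1) := by
        rw [Real.sqrt_mul (by norm_num)]; field_simp

theorem eventually_succ_mul_factorial_mul_exp_le {a : ℝ} (ha : a < 1) :
    ∀ᶠ n : ℕ in atTop, (n + 1 : ℝ) * n ! * exp (a * n) ≤ exp (-((1 - a) / 2) * n) * n ^ n := by
  have hlittleO := ((isLittleO_pow_exp_pos_mul_atTop 2 (b := (1 - a) / 2) (by linarith)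
    ).comp_tendsto tendsto_natCast_atTop_atTop).bound (c := 1 / 6) (by norm_num)
  filter_upwards [hlittleO, eventually_ge_atTop 1] with n hpoly hn
  simp only [Function.comp_apply, norm_pow, Real.norm_eq_abs, Nat.abs_cast, abs_exp] at hpoly
  have hn' : (1 : ℝ) ≤ n := by exact_mod_cast hn
  have hsqrt : √(n : ℝ) ≤ n := Real.sqrt_le_self_iff.2 (Or.inr hn')
  have he : exp 1 ≤ 3 := exp_one_lt_d9.le.trans (by norm_num)
  have hpow : ((n : ℝ) / exp 1) ^ n = n ^ n * exp (-n) := by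
    rw [div_pow, ← exp_nat_mul, mul_one, exp_neg, div_eq_mul_inv]
  calc (n + 1 : ℝ) * n ! * exp (a * n)
      ≤ (n + 1) * (exp 1 * √n * (n ^ n * exp (-n))) * exp (a * n) := by
        rw [← hpow]; gcongr; exact factorial_le_exp_one_mul_sqrt_mul_pow (by omega)
    _ = ((n + 1) * exp 1 * √n) * exp ((a - 1) * n) * n ^ n := by
        rw [show (a - 1) * n = -n + a * n by ring, exp_add]; ring
    _ ≤ ((2 * n) * 3 * n) * exp ((a - 1) * n) * n ^ n := by gcongr; linarith
    _ ≤ exp ((1 - a) / 2 * n) * exp ((a - 1) * n) * n ^ n := by gcongr; linarith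
    _ = exp (-((1 - a) / 2) * n) * n ^ n := by rw [← exp_add]; ring_nf

theorem log_eight_lt_three : log 8 < 3 := by
  have he : 2 < exp 1 := by linarith [add_one_lt_exp (one_ne_zero (α := ℝ))]
  rw [log_lt_iff_lt_exp (by norm_num), show (3 : ℝ) = (3 : ℕ) * 1 by norm_num, exp_nat_mul]
  calc (8 : ℝ) = 2 ^ 3 := by norm_num
    _ < exp 1 ^ 3 := by gcongr

theorem stmt11 :
    ∃ c : ℝ, 0 < c ∧ ∃ n₀ : ℕ, ∀ n : ℕ, n₀ ≤ n →
      (Nat.card {f : Fin n → Fin n // ∃ σ : Equiv.Perm (Fin n),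
          (Nat.card {i : Fin n // f i ≠ σ i} : ℝ) < (n : ℝ) / 8} : ℝ)
        ≤ Real.exp (-c * n) * (n : ℝ) ^ n := by
  have ha : (log 8 + 1) / 4 < 1 := by linarith [log_eight_lt_three]
  obtain ⟨n₀, hn₀⟩ := eventually_atTop.1 (eventually_succ_mul_factorial_mul_exp_le ha)
  exact ⟨_, by linarith, n₀, fun n hn => (card_near_perm_le n).trans (hn₀ n hn)⟩
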